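/- Let φ be C^{k+1} on [a,b] with grid points x_j = a + j·h, h = (b−a)/N, and let Pφ be the piecewise degree-(2k+1) Hermite interpolant on each cell [x_j, x_{j+1}] matching derivatives of orders 0,...,k of φ at the grid points. Then ∫_a^b (Pφ)(x) dx = ∫_a^b φ(x) dx − h^{k+1} ∫_a^b E_k((x−a)/h) φ^{(k+1)}(x) dx, where E_k is the 1-periodic extension of μ_k = r_k^{(k+1)}, r_k(x) = x^{k+1}(1−x)^{k+1}/(2k+2)!. -/

import Mathlib

/-!
On a cell `[c, d]` let `W x = (x - c)^(k+1) (d - x)^(k+1) / (2k+2)!`. It vanishes to order `k + 1`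
at both ends and `W^(2k+2) = (-1)^(k+1)`. Integrating by parts `k + 1` times,
`∫ W^(k+1) (φ - p)^(k+1) = ∫ (φ - p)`, because the Hermite conditions make `φ - p` vanish to order
`k + 1` at both ends, while `∫ W^(k+1) p^(k+1) = ± ∫ W p^(2k+2) = 0` because `deg p ≤ 2k + 1`.
Hence `∫ p = ∫ φ - ∫ W^(k+1) φ^(k+1)` on every cell. Rescaling, `W^(k+1) x = h^(k+1) μ_k ((x-c)/h)`,
and `(x - c)/h` is the fractional part of `(x - a)/h` inside the cell; summing over the cells
gives the formula.
-/

open MeasureTheory Polynomial Set Topology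

namespace Polynomial

theorem iteratedDeriv_eval {𝕜 : Type*} [NontriviallyNormedField 𝕜] (p : 𝕜[X]) (n : ℕ) :
    iteratedDeriv n (fun t => p.eval t) = fun t => (derivative^[n] p).eval t := by
  induction n generalizing p with
  | zero => simp
  | succ n ih =>
    have hderiv : (deriv fun t => p.eval t) = fun t => p.derivative.eval t := by
      ext; exact p.deriv
    rw [iteratedDeriv_succ', hderiv, ih, Function.iterate_succ_apply]

theorem hasDerivAt_iterate_derivative_eval {𝕜 : Type*} [NontriviallyNormedField 𝕜] (p : 𝕜[X])
    (m : ℕ) (x : 𝕜) :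
    HasDerivAt (fun t => (derivative^[m] p).eval t) ((derivative^[m + 1] p).eval x) x := by
  rw [Function.iterate_succ_apply']
  exact Polynomial.hasDerivAt _ x

theorem eval_iterate_derivative_eq_zero_of_pow_dvd {R : Type*} [CommRing R] {p : R[X]} {t : R}
    {n m : ℕ} (hp : (X - C t) ^ n ∣ p) (hm : m < n) : (derivative^[m] p).eval t = 0 :=
  dvd_iff_isRoot.mp <| (dvd_pow_self _ (Nat.sub_ne_zero_of_lt hm)).trans
    (pow_sub_dvd_iterate_derivative_of_pow_dvd _ hp)

theorem Monic.iterate_derivative_natDegree {R : Type*} [CommSemiring R] {p : R[X]}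
    (hp : p.Monic) : derivative^[p.natDegree] p = C (p.natDegree.factorial : R) := by
  have hdeg : (derivative^[p.natDegree] p).natDegree ≤ 0 := by
    simpa using natDegree_iterate_derivative p p.natDegree
  rw [eq_C_of_natDegree_le_zero hdeg, coeff_iterate_derivative, zero_add,
    Nat.descFactorial_self, hp.coeff_natDegree, nsmul_one]

theorem iterate_derivative_comp_C_mul_X_sub_C {R : Type*} [CommRing R] (p : R[X]) (s c : R)
    (m : ℕ) : derivative^[m] (p.comp (C s * (X - C c))) =
      C (s ^ m) * (derivative^[m] p).comp (C s * (X - C c)) := by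
  induction m with
  | zero => simp
  | succ m ih =>
    rw [Function.iterate_succ_apply', ih, derivative_C_mul, derivative_comp,
      Function.iterate_succ_apply']
    simp only [derivative_mul, derivative_C, zero_mul, derivative_sub, derivative_X,
      zero_add, sub_zero, mul_one, pow_succ, C_mul]
    ring

end Polynomial

noncomputable def hermiteBubble (k : ℕ) (c d : ℝ) : ℝ[X] :=
  C ((2 * k + 2).factorial : ℝ)⁻¹ * ((X - C c) ^ (k + 1) * (C d - X) ^ (k + 1))

namespace hermiteBubble

theorem eval_zero_one (k : ℕ) (t : ℝ) :
    (hermiteBubble k 0 1).eval t = t ^ (k + 1) * (1 - t) ^ (k + 1) / (2 * k + 2).factorial := by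
  simp [hermiteBubble, div_eq_inv_mul]

theorem eval_iterate_derivative_left (k : ℕ) (c d : ℝ) {m : ℕ} (hm : m ≤ k) :
    (derivative^[m] (hermiteBubble k c d)).eval c = 0 :=
  eval_iterate_derivative_eq_zero_of_pow_dvd (n := k + 1)
    ⟨C ((2 * k + 2).factorial : ℝ)⁻¹ * (C d - X) ^ (k + 1), by rw [hermiteBubble]; ring⟩
    (by omega)

theorem eval_iterate_derivative_right (k : ℕ) (c d : ℝ) {m : ℕ} (hm : m ≤ k) :
    (derivative^[m] (hermiteBubble k c d)).eval d = 0 := by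
  refine eval_iterate_derivative_eq_zero_of_pow_dvd (n := k + 1)
    ⟨C ((2 * k + 2).factorial : ℝ)⁻¹ * (-1) ^ (k + 1) * (X - C c) ^ (k + 1), ?_⟩
    (by omega)
  rw [hermiteBubble, ← neg_sub X (C d), neg_pow]
  ring

theorem iterate_derivative_top (k : ℕ) (c d : ℝ) :
    derivative^[2 * k + 2] (hermiteBubble k c d) = C ((-1) ^ (k + 1)) := by
  have hmonic : ((X - C c) ^ (k + 1) * (X - C d) ^ (k + 1)).Monic :=
    ((monic_X_sub_C c).pow _).mul ((monic_X_sub_C d).pow _)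
  have hdeg : ((X - C c) ^ (k + 1) * (X - C d) ^ (k + 1)).natDegree = 2 * k + 2 := by
    rw [((monic_X_sub_C c).pow _).natDegree_mul ((monic_X_sub_C d).pow _)]
    simp only [natDegree_pow, natDegree_X_sub_C]
    ring
  have hsplit : hermiteBubble k c d = C (((2 * k + 2).factorial : ℝ)⁻¹ * (-1) ^ (k + 1)) *
      ((X - C c) ^ (k + 1) * (X - C d) ^ (k + 1)) := by
    rw [hermiteBubble, ← neg_sub X (C d), neg_pow, C_mul, C_pow, C_neg, C_1]
    ring
  rw [hsplit, iterate_derivative_C_mul, ← hdeg, hmonic.iterate_derivative_natDegree, hdeg,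
    ← C_mul]
  congr 1
  field_simp

theorem eq_C_mul_comp (k : ℕ) {c d : ℝ} (hcd : c ≠ d) :
    hermiteBubble k c d =
      C ((d - c) ^ (2 * k + 2)) * (hermiteBubble k 0 1).comp (C (d - c)⁻¹ * (X - C c)) := by
  have h : d - c ≠ 0 := sub_ne_zero.mpr hcd.symm
  refine Polynomial.funext fun x => ?_
  simp only [hermiteBubble, eval_mul, eval_C, eval_pow, eval_sub, eval_X, eval_comp, map_zero,
    map_one, sub_zero, eval_one]
  obtain ⟨t, rfl⟩ : ∃ t, x = c + (d - c) * t := ⟨(x - c) / (d - c), by field_simp; ring⟩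
  rw [show c + (d - c) * t - c = (d - c) * t by ring,
    show d - (c + (d - c) * t) = (d - c) * (1 - t) by ring, inv_mul_cancel_left₀ h, mul_pow,
    mul_pow]
  ring

theorem eval_iterate_derivative_rescale (k m : ℕ) {c d : ℝ} (hcd : c ≠ d) (x : ℝ) :
    (derivative^[m] (hermiteBubble k c d)).eval x = (d - c) ^ (2 * k + 2) * (d - c)⁻¹ ^ m *
      (derivative^[m] (hermiteBubble k 0 1)).eval ((x - c) / (d - c)) := by
  rw [eq_C_mul_comp k hcd, iterate_derivative_C_mul, iterate_derivative_comp_C_mul_X_sub_C]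
  simp only [eval_mul, eval_C, eval_comp, eval_sub, eval_X]
  rw [div_eq_inv_mul]
  ring

end hermiteBubble

theorem ContDiffOn.hasDerivAt_iteratedDerivWithin {𝕜 F : Type*} [NontriviallyNormedField 𝕜]
    [NormedAddCommGroup F] [NormedSpace 𝕜 F] {f : 𝕜 → F} {s : Set 𝕜} {n : WithTop ℕ∞} {m : ℕ}
    (hf : ContDiffOn 𝕜 n f s) (hs : UniqueDiffOn 𝕜 s) (hmn : (m : WithTop ℕ∞) < n) {x : 𝕜}
    (hx : s ∈ 𝓝 x) :
    HasDerivAt (iteratedDerivWithin m f s) (iteratedDerivWithin (m + 1) f s x) x := by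
  rw [iteratedDerivWithin_succ]
  exact ((hf.differentiableOn_iteratedDerivWithin hmn hs) x (mem_of_mem_nhds hx)).hasDerivWithinAt
    |>.hasDerivAt hx

namespace intervalIntegral

theorem integral_mul_eq_neg_one_pow_mul_of_hasDerivAt {c d : ℝ} (hcd : c ≤ d) (n : ℕ)
    (f g : ℕ → ℝ → ℝ) (hf : ∀ m ≤ n, ContinuousOn (f m) (Icc c d))
    (hg : ∀ m ≤ n, ContinuousOn (g m) (Icc c d))
    (hf' : ∀ m < n, ∀ x ∈ Ioo c d, HasDerivAt (f m) (f (m + 1) x) x)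
    (hg' : ∀ m < n, ∀ x ∈ Ioo c d, HasDerivAt (g m) (g (m + 1) x) x)
    (hfc : ∀ m < n, f m c = 0) (hfd : ∀ m < n, f m d = 0) :
    ∫ x in c..d, g 0 x * f n x = (-1) ^ n * ∫ x in c..d, g n x * f 0 x := by
  induction n generalizing g with
  | zero => simp
  | succ n ih =>
    have hIcc : uIcc c d = Icc c d := uIcc_of_le hcd
    have hIoo : Ioo (min c d) (max c d) = Ioo c d := by rw [min_eq_left hcd, max_eq_right hcd]
    have hparts := integral_mul_deriv_eq_deriv_mul_of_hasDerivAt (hIcc ▸ hg 0 (by omega))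
      (hIcc ▸ hf n (by omega)) (hIoo ▸ hg' 0 (by omega)) (hIoo ▸ hf' n (by omega))
      ((hg 1 (by omega)).intervalIntegrable_of_Icc hcd)
      ((hf (n + 1) le_rfl).intervalIntegrable_of_Icc hcd)
    rw [hparts, hfc n (by omega), hfd n (by omega), ih (fun m => g (m + 1))
      (fun m hm => hf m (by omega)) (fun m hm => hg (m + 1) (by omega))
      (fun m hm => hf' m (by omega)) (fun m hm => hg' (m + 1) (by omega))
      (fun m hm => hfc m (by omega)) (fun m hm => hfd m (by omega)), pow_succ]
    ring

theorem integral_eq_sub_const_mul_of_adjacent_intervals {f g w : ℝ → ℝ} {x : ℕ → ℝ} {N : ℕ}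
    (C : ℝ)
    (hf : ∀ j < N, IntervalIntegrable f volume (x j) (x (j + 1)))
    (hg : ∀ j < N, IntervalIntegrable g volume (x j) (x (j + 1)))
    (hw : ∀ j < N, IntervalIntegrable w volume (x j) (x (j + 1)))
    (hcell : ∀ j < N, ∫ y in x j..x (j + 1), f y =
      (∫ y in x j..x (j + 1), g y) - C * ∫ y in x j..x (j + 1), w y) :
    ∫ y in x 0..x N, f y = (∫ y in x 0..x N, g y) - C * ∫ y in x 0..x N, w y := by
  rw [← sum_integral_adjacent_intervals hf, ← sum_integral_adjacent_intervals hg,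
    ← sum_integral_adjacent_intervals hw, Finset.mul_sum, ← Finset.sum_sub_distrib]
  exact Finset.sum_congr rfl fun j hj => hcell j (Finset.mem_range.mp hj)

end intervalIntegral

theorem eqOn_comp_fract_div {a h : ℝ} (hh : 0 < h) (j : ℕ) {β : Type*} (μ : ℝ → β) :
    EqOn (fun x => μ (Int.fract ((x - a) / h))) (fun x => μ ((x - (a + j * h)) / h))
      (Ioo (a + j * h) (a + (j + 1) * h)) := by
  intro x hx
  simp only
  congr 1
  rw [Int.fract_eq_iff]
  refine ⟨div_nonneg (by linarith [hx.1]) hh.le, (div_lt_one hh).2 (by linarith [hx.2]), j, ?_⟩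
  field_simp
  push_cast
  ring

theorem integral_hermite_eq_sub_bubble {k : ℕ} {c d : ℝ} (hcd : c < d) {S : Set ℝ}
    (hS : UniqueDiffOn ℝ S) (hcdS : Icc c d ⊆ S) {φ : ℝ → ℝ}
    (hφ : ContDiffOn ℝ (k + 1 : ℕ) φ S) {p : ℝ[X]} (hp : p.natDegree ≤ 2 * k + 1)
    (hpc : ∀ m ≤ k, (derivative^[m] p).eval c = iteratedDerivWithin m φ S c)
    (hpd : ∀ m ≤ k, (derivative^[m] p).eval d = iteratedDerivWithin m φ S d) :
    ∫ x in c..d, p.eval x = (∫ x in c..d, φ x) -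
      ∫ x in c..d, (derivative^[k + 1] (hermiteBubble k c d)).eval x *
        iteratedDerivWithin (k + 1) φ S x := by
  set W := hermiteBubble k c d
  set e : ℕ → ℝ → ℝ := fun m x => iteratedDerivWithin m φ S x - (derivative^[m] p).eval x
  have hpoly_cont : ∀ (q : ℝ[X]) (m : ℕ), ContinuousOn (fun x => (derivative^[m] q).eval x)
      (Icc c d) := fun q m => (Polynomial.continuous _).continuousOn
  have hφ_cont : ∀ m ≤ k + 1, ContinuousOn (iteratedDerivWithin m φ S) (Icc c d) :=
    fun m hm => (hφ.continuousOn_iteratedDerivWithin (by exact_mod_cast hm) hS).mono hcdS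
  have he_cont : ∀ m ≤ k + 1, ContinuousOn (e m) (Icc c d) :=
    fun m hm => (hφ_cont m hm).sub (hpoly_cont p m)
  have he_deriv : ∀ m < k + 1, ∀ x ∈ Ioo c d, HasDerivAt (e m) (e (m + 1) x) x :=
    fun m hm x hx => (hφ.hasDerivAt_iteratedDerivWithin hS (by exact_mod_cast hm)
      (Filter.mem_of_superset (Icc_mem_nhds hx.1 hx.2) hcdS)).sub
      (hasDerivAt_iterate_derivative_eval p m x)
  -- `φ - p` vanishes to order `k + 1` at both ends, so all its derivatives move onto `W`
  have hflat : ∫ x in c..d, (derivative^[k + 1] W).eval x * e (k + 1) x =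
      ∫ x in c..d, φ x - p.eval x := by
    have := intervalIntegral.integral_mul_eq_neg_one_pow_mul_of_hasDerivAt hcd.le (k + 1) e
      (fun m x => (derivative^[k + 1 + m] W).eval x) he_cont (fun m _ => hpoly_cont W _)
      he_deriv (fun m _ x _ => hasDerivAt_iterate_derivative_eval W (k + 1 + m) x)
      (fun m hm => by simp [e, hpc m (by omega)]) (fun m hm => by simp [e, hpd m (by omega)])
    rw [add_zero, show k + 1 + (k + 1) = 2 * k + 2 by ring,
      hermiteBubble.iterate_derivative_top] at this
    simp only [this, e, eval_C, iteratedDerivWithin_zero, Function.iterate_zero_apply,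
      intervalIntegral.integral_const_mul, ← mul_assoc, ← mul_pow, neg_one_mul, neg_neg, one_pow,
      one_mul]
  -- `W` vanishes to order `k + 1` at both ends, so its derivatives move onto `p`
  have hpoly :
      ∫ x in c..d, (derivative^[k + 1] p).eval x * (derivative^[k + 1] W).eval x = 0 := by
    have := intervalIntegral.integral_mul_eq_neg_one_pow_mul_of_hasDerivAt hcd.le (k + 1)
      (fun m x => (derivative^[m] W).eval x) (fun m x => (derivative^[k + 1 + m] p).eval x)
      (fun m _ => hpoly_cont W m) (fun m _ => hpoly_cont p _)
      (fun m _ x _ => hasDerivAt_iterate_derivative_eval W m x)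
      (fun m _ x _ => hasDerivAt_iterate_derivative_eval p (k + 1 + m) x)
      (fun m hm => hermiteBubble.eval_iterate_derivative_left k c d (by omega))
      (fun m hm => hermiteBubble.eval_iterate_derivative_right k c d (by omega))
    rw [add_zero, iterate_derivative_eq_zero (x := k + 1 + (k + 1)) (by omega)] at this
    rw [this]
    simp
  have hint : ∀ F : ℝ → ℝ, ContinuousOn F (Icc c d) → IntervalIntegrable F volume c d :=
    fun F hF => hF.intervalIntegrable_of_Icc hcd.le
  have hsplit : ∫ x in c..d, (derivative^[k + 1] W).eval x * iteratedDerivWithin (k + 1) φ S x =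
      (∫ x in c..d, (derivative^[k + 1] W).eval x * e (k + 1) x) +
        ∫ x in c..d, (derivative^[k + 1] p).eval x * (derivative^[k + 1] W).eval x := by
    rw [← intervalIntegral.integral_add
      (f := fun x => (derivative^[k + 1] W).eval x * e (k + 1) x)
      (g := fun x => (derivative^[k + 1] p).eval x * (derivative^[k + 1] W).eval x)
      (hint _ ((hpoly_cont W _).mul (he_cont _ le_rfl)))
      (hint _ ((hpoly_cont p _).mul (hpoly_cont W _)))]
    congr 1 with x
    ring
  rw [hsplit, hflat, hpoly, add_zero,
    intervalIntegral.integral_sub (hint φ (hφ.continuousOn.mono hcdS))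
      (hint _ p.continuous.continuousOn)]
  ring

theorem integral_hermite_eq_sub_rescaled_bubble {k : ℕ} {c d : ℝ} (hcd : c < d) {S : Set ℝ}
    (hS : UniqueDiffOn ℝ S) (hcdS : Icc c d ⊆ S) {φ : ℝ → ℝ}
    (hφ : ContDiffOn ℝ (k + 1 : ℕ) φ S) {p : ℝ[X]} (hp : p.natDegree ≤ 2 * k + 1)
    (hpc : ∀ m ≤ k, (derivative^[m] p).eval c = iteratedDerivWithin m φ S c)
    (hpd : ∀ m ≤ k, (derivative^[m] p).eval d = iteratedDerivWithin m φ S d) :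
    ∫ x in c..d, p.eval x = (∫ x in c..d, φ x) - (d - c) ^ (k + 1) *
      ∫ x in c..d, (derivative^[k + 1] (hermiteBubble k 0 1)).eval ((x - c) / (d - c)) *
        iteratedDerivWithin (k + 1) φ S x := by
  have hscale : (d - c) ^ (2 * k + 2) * (d - c)⁻¹ ^ (k + 1) = (d - c) ^ (k + 1) := by
    rw [show 2 * k + 2 = (k + 1) + (k + 1) by ring, pow_add, mul_assoc, ← mul_pow,
      mul_inv_cancel₀ (sub_ne_zero.mpr hcd.ne'), one_pow, mul_one]
  rw [integral_hermite_eq_sub_bubble hcd hS hcdS hφ hp hpc hpd,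
    ← intervalIntegral.integral_const_mul]
  simp only [hermiteBubble.eval_iterate_derivative_rescale k (k + 1) hcd.ne, hscale, mul_assoc]

theorem integral_hermite_eq_sub_periodized_bubble {k : ℕ} {a h : ℝ} (hh : 0 < h) (j : ℕ)
    {S : Set ℝ} (hS : UniqueDiffOn ℝ S) (hjS : Icc (a + j * h) (a + (j + 1) * h) ⊆ S)
    {φ : ℝ → ℝ} (hφ : ContDiffOn ℝ (k + 1 : ℕ) φ S) {p : ℝ[X]} (hp : p.natDegree ≤ 2 * k + 1)
    (hpc : ∀ m ≤ k, iteratedDeriv m (fun t => p.eval t) (a + j * h) =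
      iteratedDerivWithin m φ S (a + j * h))
    (hpd : ∀ m ≤ k, iteratedDeriv m (fun t => p.eval t) (a + (j + 1) * h) =
      iteratedDerivWithin m φ S (a + (j + 1) * h)) :
    ∫ x in (a + j * h)..(a + (j + 1) * h), p.eval x =
      (∫ x in (a + j * h)..(a + (j + 1) * h), φ x) -
        h ^ (k + 1) * ∫ x in (a + j * h)..(a + (j + 1) * h),
          (derivative^[k + 1] (hermiteBubble k 0 1)).eval (Int.fract ((x - a) / h)) *
            iteratedDerivWithin (k + 1) φ S x := by
  have hlen : a + (j + 1) * h - (a + j * h) = h := by ring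
  rw [integral_hermite_eq_sub_rescaled_bubble (by linarith) hS hjS hφ hp
    (fun m hm => by rw [← hpc m hm, iteratedDeriv_eval])
    (fun m hm => by rw [← hpd m hm, iteratedDeriv_eval]), hlen]
  congr 2
  refine intervalIntegral.integral_congr_uIoo fun x hx => ?_
  rw [uIoo_of_le (by linarith)] at hx
  have hfract := eqOn_comp_fract_div hh j (derivative^[k + 1] (hermiteBubble k 0 1)).eval hx
  simp only at hfract
  rw [hfract]

theorem intervalIntegrable_eval_fract_div_mul {a h : ℝ} (hh : 0 < h) (j : ℕ) (q : ℝ[X])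
    {g : ℝ → ℝ} (hg : ContinuousOn g (Icc (a + j * h) (a + (j + 1) * h))) :
    IntervalIntegrable (fun x => q.eval (Int.fract ((x - a) / h)) * g x) volume
      (a + j * h) (a + (j + 1) * h) := by
  have hle : a + j * h ≤ a + (j + 1) * h := by nlinarith
  have hcont : ContinuousOn (fun x => q.eval ((x - (a + j * h)) / h) * g x)
      (Icc (a + j * h) (a + (j + 1) * h)) :=
    (q.continuous.comp (by fun_prop)).continuousOn.mul hg
  refine (hcont.intervalIntegrable_of_Icc hle).congr_uIoo fun x hx => ?_
  rw [uIoo_of_le hle] at hx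
  have hfract := eqOn_comp_fract_div hh j q.eval hx
  simp only at hfract
  simp only [hfract]

/-- Global average formula for the piecewise Hermite interpolant on a uniform grid.
Let `φ` be `C^{k+1}` on `[a,b]`, with grid points `x_j = a + j·h`, `h = (b-a)/N`, and let
`Pφ` agree on each cell `[x_j, x_{j+1}]` with the degree-`(2k+1)` Hermite interpolant of
`φ` (matching derivatives of orders `0,…,k` at the cell endpoints). Then
`∫_a^b Pφ = ∫_a^b φ - h^{k+1} ∫_a^b E_k((x-a)/h) φ^{(k+1)}(x) dx`,
where `E_k` is the 1-periodic extension of `μ_k = r_k^{(k+1)}`,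
`r_k x = x^{k+1}(1-x)^{k+1}/(2k+2)!`. -/
theorem piecewise_hermite_global_average (k N : ℕ) (hN : 0 < N) (a b : ℝ) (hab : a < b)
    (φ Pφ : ℝ → ℝ)
    (hφ : ContDiffOn ℝ (k + 1 : ℕ) φ (Set.Icc a b))
    (h : ℝ) (hh : h = (b - a) / N)
    (hP : ∀ j < N, ∃ p : Polynomial ℝ, p.natDegree ≤ 2 * k + 1 ∧
      (∀ x ∈ Set.Icc (a + j * h) (a + (j + 1) * h), Pφ x = p.eval x) ∧
      (∀ α ≤ k, iteratedDeriv α (fun t => p.eval t) (a + j * h) =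
          iteratedDerivWithin α φ (Set.Icc a b) (a + j * h)) ∧
      (∀ α ≤ k, iteratedDeriv α (fun t => p.eval t) (a + (j + 1) * h) =
          iteratedDerivWithin α φ (Set.Icc a b) (a + (j + 1) * h))) :
    let r : ℝ → ℝ := fun x => x ^ (k + 1) * (1 - x) ^ (k + 1) / (Nat.factorial (2 * k + 2))
    let μ : ℝ → ℝ := iteratedDeriv (k + 1) r
    let E : ℝ → ℝ := fun z => μ (Int.fract z)
    ∫ x in a..b, Pφ x =
      (∫ x in a..b, φ x) -
        h ^ (k + 1) *
          ∫ x in a..b, E ((x - a) / h) * iteratedDerivWithin (k + 1) φ (Set.Icc a b) x := by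
  intro r μ E
  have hh0 : 0 < h := hh ▸ div_pos (sub_pos.2 hab) (Nat.cast_pos.2 hN)
  have hE : E = fun z => (derivative^[k + 1] (hermiteBubble k 0 1)).eval (Int.fract z) := by
    simp only [E, μ, r, ← hermiteBubble.eval_zero_one, iteratedDeriv_eval]
  have hb : a + N * h = b := by rw [hh]; field_simp; ring
  have hcell_le : ∀ j : ℕ, a + j * h ≤ a + (j + 1) * h := fun j => by nlinarith
  have hsub : ∀ j < N, Icc (a + j * h) (a + (j + 1) * h) ⊆ Icc a b := by
    intro j hj
    have hj' : (j : ℝ) + 1 ≤ N := by exact_mod_cast hj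
    exact Icc_subset_Icc (by nlinarith) (hb ▸ by gcongr)
  have hS : UniqueDiffOn ℝ (Icc a b) := uniqueDiffOn_Icc hab
  have key := intervalIntegral.integral_eq_sub_const_mul_of_adjacent_intervals
    (x := fun j : ℕ => a + j * h) (N := N) (f := Pφ) (g := φ)
    (w := fun y => E ((y - a) / h) * iteratedDerivWithin (k + 1) φ (Icc a b) y)
    (h ^ (k + 1)) ?_ ?_ ?_ ?_
  · simpa only [Nat.cast_zero, zero_mul, add_zero, hb] using key
  all_goals intro j hj; push_cast
  · obtain ⟨p, -, hPp, -, -⟩ := hP j hj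
    refine (p.continuous.intervalIntegrable _ _).congr_uIoo fun x hx => (hPp x ?_).symm
    rw [uIoo_of_le (hcell_le j)] at hx
    exact Ioo_subset_Icc_self hx
  · exact (hφ.continuousOn.mono (hsub j hj)).intervalIntegrable_of_Icc (hcell_le j)
  · exact hE ▸ intervalIntegrable_eval_fract_div_mul hh0 j _
      ((hφ.continuousOn_iteratedDerivWithin le_rfl hS).mono (hsub j hj))
  · obtain ⟨p, hdeg, hPp, hpc, hpd⟩ := hP j hj
    rw [intervalIntegral.integral_congr (g := fun x => p.eval x)
        fun x hx => hPp x (by rwa [uIcc_of_le (hcell_le j)] at hx),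
      integral_hermite_eq_sub_periodized_bubble hh0 j hS (hsub j hj) hφ hdeg hpc hpd, hE]
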